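/- Let W be a Coxeter group and J, K ⊆ I. The orbits of the left W_J-action on the coset space W/W_K are in natural bijection with the set ᴶWᴷ of minimal-length (W_J, W_K)-double coset representatives; moreover, the orbit of the coset w·W_K for w ∈ ᴶWᴷ is isomorphic as a W_J-set to W_J/(W_J ∩ w·W_K·w⁻¹). -/

import Mathlib

/-!
The engine is the exchange condition. The number of times a reflection `t` occurs in the left
inversion sequence of a word depends, mod 2, only on the element the word represents: it is read
off from Tits' permutation representation of `W` on `W × ZMod 2`. Hence if `s i` shortens `π ω`
on the left, then `s i` occurs in that sequence, and deleting the corresponding letter of `ω`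
yields a word for `s i * π ω`.

Let `u` be a minimal double coset representative with reduced word `δ`. By exchange, the elements
with a reduced word `α ++ δ ++ β`, where `α` is a `J`-word and `β` a `K`-word, are closed under
left multiplication by `s i` (`i ∈ J`) and, reversing words, under right multiplication by `s k`
(`k ∈ K`); a letter of `δ` can never be the one deleted, by minimality of `u`. So every element
of `W_J u W_K` has length `ℓ u + |α| + |β|`, and `u` is the only minimal element of its double
coset. Orbits of `W_J` on `W/W_K` are the images of double cosets, and the stabilizer of `w W_K`
in `W_J` is `W_J ∩ w W_K w⁻¹`.
-/

/-- The standard parabolic subgroup of a Coxeter group generated by the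
simple reflections indexed by `J`. -/
def CoxeterSystem.parabolic {B W : Type*} [Group W] {M : CoxeterMatrix B}
    (cs : CoxeterSystem M W) (J : Set B) : Subgroup W :=
  Subgroup.closure (cs.simple '' J)

/-- A predicate asserting that `w` is a minimal-length `(W_J, W_K)`-double coset
representative. -/
def CoxeterSystem.IsMinDoubleCosetRep {B W : Type*} [Group W] {M : CoxeterMatrix B}
    (cs : CoxeterSystem M W) (J K : Set B) (w : W) : Prop :=
  ∀ a ∈ cs.parabolic J, ∀ b ∈ cs.parabolic K, cs.length w ≤ cs.length (a * w * b)

open List DoubleCoset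

namespace CoxeterSystem

variable {B W : Type*} [Group W] {M : CoxeterMatrix B} (cs : CoxeterSystem M W)

local prefix:100 "s " => cs.simple
local prefix:100 "π " => cs.wordProd
local prefix:100 "ℓ " => cs.length
local prefix:100 "lis " => cs.leftInvSeq

theorem prod_map_alternatingWord_two_mul {G : Type*} [Monoid G] (f : B → G) (i j : B) (m : ℕ) :
    ((alternatingWord i j (2 * m)).map f).prod = (f i * f j) ^ m := by
  induction m with
  | zero => simp [alternatingWord]
  | succ m ih =>
    rw [mul_add, mul_one, alternatingWord_succ', alternatingWord_succ']
    simp [ih, pow_succ', mul_assoc]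

theorem leftInvSeq_alternatingWord_two_mul (i j : B) (p : ℕ) :
    lis (alternatingWord i j (2 * p)) =
      (range (2 * p)).map fun k ↦ π (alternatingWord j i (2 * k + 1)) :=
  List.ext_getElem (by simp) fun k hk _ ↦ by
    rw [getElem_leftInvSeq_alternatingWord cs i j p k (by simpa using hk), getElem_map,
      getElem_range]

section ReflectionCocycle

variable [DecidableEq W]

-- The action of `s i` in Tits' permutation representation of `W` on `W × ZMod 2`.
def reflectionPerm (i : B) : Equiv.Perm (W × ZMod 2) :=
  Function.Involutive.toPerm (fun x ↦ (s i * x.1 * s i, x.2 + if x.1 = s i then 1 else 0)) <| by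
    rintro ⟨t, ε⟩
    by_cases h : t = s i
    · simp [h, add_assoc, CharTwo.add_self_eq_zero]
    · simp [h, mul_assoc, mul_eq_one_iff_eq_inv]

theorem count_leftInvSeq_cons (i : B) (ω : List B) (y : W) :
    (lis (i :: ω)).count (s i * y * s i) = (lis ω).count y + if y = s i then 1 else 0 := by
  have hconj : s i * y * s i = MulAut.conj (s i) y := by simp
  have hfix : MulAut.conj (s i) (s i) = s i := by simp
  simp only [leftInvSeq, count_cons, hconj,
    count_map_of_injective _ _ (MulAut.conj (s i)).injective, beq_iff_eq, eq_comm (a := s i),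
    (MulAut.conj (s i)).injective.eq_iff' hfix]

theorem prod_map_reflectionPerm (ω : List B) (t : W) (ε : ZMod 2) :
    (ω.map cs.reflectionPerm).prod (t, ε) =
      (π ω * t * (π ω)⁻¹, ε + ((lis ω).count (π ω * t * (π ω)⁻¹) : ZMod 2)) := by
  induction ω generalizing t ε with
  | nil => simp
  | cons i ω ih =>
    have hconj : π (i :: ω) * t * (π (i :: ω))⁻¹ = s i * (π ω * t * (π ω)⁻¹) * s i := by
      simp [wordProd_cons, mul_assoc]
    rw [map_cons, prod_cons, Equiv.Perm.mul_apply, ih, hconj, count_leftInvSeq_cons]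
    push_cast
    rw [← add_assoc]
    rfl

theorem even_count_leftInvSeq_alternatingWord (i j : B) (t : W) :
    Even ((lis (alternatingWord i j (2 * M i j))).count t) := by
  have hperiodic : ∀ k, π (alternatingWord j i (2 * (M i j + k) + 1)) =
      π (alternatingWord j i (2 * k + 1)) := by
    intro k
    have hdiv : ∀ n, (2 * n + 1) / 2 = n := by omega
    simp [prod_alternatingWord_eq_mul_pow, hdiv, pow_add]
  rw [leftInvSeq_alternatingWord_two_mul, two_mul, range_add, map_append, map_map,
    Function.comp_def]
  simp only [hperiodic, count_append]
  exact ⟨_, rfl⟩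

theorem isLiftable_reflectionPerm : M.IsLiftable cs.reflectionPerm := by
  intro i j
  have hπ : π (alternatingWord i j (2 * M i j)) = 1 := by
    simp [prod_alternatingWord_eq_mul_pow]
  ext ⟨t, ε⟩ : 1
  rw [← prod_map_alternatingWord_two_mul, prod_map_reflectionPerm, hπ,
    (ZMod.natCast_eq_zero_iff_even).2 (cs.even_count_leftInvSeq_alternatingWord i j _)]
  simp

theorem count_leftInvSeq_eq_of_wordProd_eq {ω ω' : List B} (h : π ω = π ω') (t : W) :
    ((lis ω).count t : ZMod 2) = (lis ω').count t := by
  let φ := cs.lift ⟨_, cs.isLiftable_reflectionPerm⟩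
  have hφ : ∀ ω, φ (π ω) = (ω.map cs.reflectionPerm).prod := by
    intro ω
    simp [φ, wordProd, map_list_prod, Function.comp_def]
  have := congrArg (fun σ : Equiv.Perm (W × ZMod 2) ↦ (σ ((π ω)⁻¹ * t * π ω, 0)).2)
    ((hφ ω).symm.trans ((congrArg φ h).trans (hφ ω')))
  simpa [prod_map_reflectionPerm, h, mul_assoc] using this

end ReflectionCocycle

theorem simple_mem_leftInvSeq_of_isLeftDescent {ω : List B} {i : B}
    (h : cs.IsLeftDescent (π ω) i) : s i ∈ lis ω := by
  classical
  obtain ⟨α, hα, hαω⟩ := cs.exists_isReduced (s i * π ω)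
  have hiα : π (i :: α) = π ω := by rw [wordProd_cons, ← hαω, simple_mul_simple_cancel_left]
  have hnotin : s i ∉ lis α := fun hmem ↦ by
    have := (cs.isLeftInversion_of_mem_leftInvSeq hα hmem).2
    rw [← hαω, simple_mul_simple_cancel_left] at this
    exact absurd h (not_lt.2 this.le)
  have hcount := cs.count_leftInvSeq_eq_of_wordProd_eq hiα (s i)
  have hself : (lis (i :: α)).count (s i) = 1 := by
    simpa [count_eq_zero.2 hnotin] using cs.count_leftInvSeq_cons i α (s i)
  rw [hself] at hcount
  refine count_pos_iff.1 (Nat.pos_of_ne_zero fun h0 ↦ ?_)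
  simp [h0] at hcount

theorem exists_wordProd_eraseIdx_eq_simple_mul {ω : List B} {i : B}
    (h : cs.IsLeftDescent (π ω) i) : ∃ j < ω.length, π (ω.eraseIdx j) = s i * π ω := by
  obtain ⟨j, hj, hget⟩ := mem_iff_getElem.1 (cs.simple_mem_leftInvSeq_of_isLeftDescent h)
  refine ⟨j, by simpa using hj, ?_⟩
  rw [← getD_leftInvSeq_mul_wordProd, getD_eq_getElem _ _ hj, hget]

theorem simple_mem_parabolic {J : Set B} {i : B} (hi : i ∈ J) : s i ∈ cs.parabolic J :=
  Subgroup.subset_closure ⟨i, hi, rfl⟩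

theorem wordProd_mem_parabolic {J : Set B} {ω : List B} (hω : ∀ j ∈ ω, j ∈ J) :
    π ω ∈ cs.parabolic J :=
  (cs.parabolic J).list_prod_mem <| by simpa using fun j hj ↦ cs.simple_mem_parabolic (hω j hj)

def HasReducedWordThrough (J K : Set B) (δ : List B) (x : W) : Prop :=
  ∃ α β : List B, (∀ j ∈ α, j ∈ J) ∧ (∀ k ∈ β, k ∈ K) ∧ cs.IsReduced (α ++ δ ++ β) ∧
    π (α ++ δ ++ β) = x

variable {cs}

theorem HasReducedWordThrough.inv {J K : Set B} {δ : List B} {x : W}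
    (hx : cs.HasReducedWordThrough J K δ x) : cs.HasReducedWordThrough K J δ.reverse x⁻¹ := by
  obtain ⟨α, β, hα, hβ, hred, rfl⟩ := hx
  refine ⟨β.reverse, α.reverse, by simpa using hβ, by simpa using hα, ?_, ?_⟩
  · simpa using hred.reverse
  · simp [← wordProd_reverse]

theorem length_le_of_wordProd_append_append_eq_simple_mul {J : Set B} {α δ δ' β : List B}
    {i : B} (hδ : ∀ c ∈ cs.parabolic J, ℓ (π δ) ≤ ℓ (c * π δ)) (hα : ∀ j ∈ α, j ∈ J)
    (hi : i ∈ J) (h : π (α ++ δ' ++ β) = s i * π (α ++ δ ++ β)) : ℓ (π δ) ≤ δ'.length := by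
  have hδ' : π δ' = ((π α)⁻¹ * s i * π α) * π δ := by
    simp only [wordProd_append] at h
    calc π δ' = (π α)⁻¹ * (π α * π δ' * π β) * (π β)⁻¹ := by group
      _ = _ := by rw [h]; group
  have hc : (π α)⁻¹ * s i * π α ∈ cs.parabolic J :=
    mul_mem (mul_mem (inv_mem (cs.wordProd_mem_parabolic hα)) (cs.simple_mem_parabolic hi))
      (cs.wordProd_mem_parabolic hα)
  calc ℓ (π δ) ≤ ℓ (π δ') := hδ' ▸ hδ _ hc
    _ ≤ δ'.length := cs.length_wordProd_le δ'

theorem HasReducedWordThrough.simple_mul {J K : Set B} {δ : List B} {x : W}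
    (hδ : ∀ c ∈ cs.parabolic J, ℓ (π δ) ≤ ℓ (c * π δ))
    (hx : cs.HasReducedWordThrough J K δ x) {i : B} (hi : i ∈ J) :
    cs.HasReducedWordThrough J K δ (s i * x) := by
  obtain ⟨α, β, hα, hβ, hred, rfl⟩ := hx
  rcases cs.length_simple_mul (π (α ++ δ ++ β)) i with hasc | hdesc
  · refine ⟨i :: α, β, by simpa [hi] using hα, hβ, ?_, by simp [wordProd_cons]⟩
    rw [IsReduced, cons_append, cons_append, wordProd_cons, hasc, hred]
    simp
  obtain ⟨j, hj, hprod⟩ :=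
    cs.exists_wordProd_eraseIdx_eq_simple_mul (show cs.IsLeftDescent (π (α ++ δ ++ β)) i by
      rw [IsLeftDescent]; omega)
  have hred' : cs.IsReduced ((α ++ δ ++ β).eraseIdx j) := by
    rw [IsReduced, hprod, length_eraseIdx_of_lt hj]; rw [IsReduced] at hred; omega
  rcases lt_or_ge j (α ++ δ).length with hjαδ | hjαδ
  · rw [eraseIdx_append_of_lt_length hjαδ] at hprod hred'
    rcases lt_or_ge j α.length with hjα | hjα
    · rw [eraseIdx_append_of_lt_length hjα] at hprod hred'
      exact ⟨α.eraseIdx j, β, fun k hk ↦ hα k (eraseIdx_subset hk), hβ, hred', hprod⟩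
    exfalso
    rw [eraseIdx_append_of_length_le hjα] at hprod
    have hshort := length_le_of_wordProd_append_append_eq_simple_mul hδ hα hi hprod
    have hδred : cs.IsReduced δ := by simpa using (hred.drop α.length).take δ.length
    have := length_eraseIdx_add_one (l := δ) (i := j - α.length) (by simp at hjαδ; omega)
    rw [IsReduced] at hδred
    omega
  · rw [eraseIdx_append_of_length_le hjαδ] at hprod hred'
    exact ⟨α, β.eraseIdx _, hα, fun k hk ↦ hβ k (eraseIdx_subset hk), hred', hprod⟩

theorem HasReducedWordThrough.mul_simple {J K : Set B} {δ : List B} {x : W}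
    (hδ : ∀ c ∈ cs.parabolic K, ℓ (π δ) ≤ ℓ (π δ * c))
    (hx : cs.HasReducedWordThrough J K δ x) {k : B} (hk : k ∈ K) :
    cs.HasReducedWordThrough J K δ (x * s k) := by
  have hδrev : ∀ c ∈ cs.parabolic K, ℓ (π δ.reverse) ≤ ℓ (c * π δ.reverse) := fun c hc ↦ by
    rw [wordProd_reverse, length_inv, ← length_inv _ (c * _), mul_inv_rev, inv_inv]
    exact hδ c⁻¹ (inv_mem hc)
  simpa using (hx.inv.simple_mul hδrev hk).inv

theorem IsMinDoubleCosetRep.length_le {J K : Set B} {w x : W}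
    (hw : cs.IsMinDoubleCosetRep J K w)
    (hx : x ∈ doubleCoset w (cs.parabolic J) (cs.parabolic K)) : ℓ w ≤ ℓ x := by
  obtain ⟨a, ha, b, hb, rfl⟩ := mem_doubleCoset.1 hx
  exact hw a ha b hb

theorem IsMinDoubleCosetRep.hasReducedWordThrough {J K : Set B} {u : W}
    (hu : cs.IsMinDoubleCosetRep J K u) {δ : List B} (hδ : cs.IsReduced δ) (hδu : π δ = u)
    {x : W} (hx : x ∈ doubleCoset u (cs.parabolic J) (cs.parabolic K)) :
    cs.HasReducedWordThrough J K δ x := by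
  subst hδu
  obtain ⟨a, ha, b, hb, rfl⟩ := mem_doubleCoset.1 hx
  clear hx
  have hJ : ∀ c ∈ cs.parabolic J, ℓ (π δ) ≤ ℓ (c * π δ) := fun c hc ↦ by
    simpa using hu c hc 1 (one_mem _)
  have hK : ∀ c ∈ cs.parabolic K, ℓ (π δ) ≤ ℓ (π δ * c) := fun c hc ↦ by
    simpa using hu 1 (one_mem _) c hc
  have hright : cs.HasReducedWordThrough J K δ (π δ * b) := by
    induction hb using Subgroup.closure_induction_right with
    | one => exact ⟨[], [], by simp, by simp, by simpa using hδ, by simp⟩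
    | mul_right b _ _ hk ih =>
      obtain ⟨k, hk, rfl⟩ := hk
      simpa only [mul_assoc] using ih.mul_simple hK hk
    | mul_inv_cancel b _ _ hk ih =>
      obtain ⟨k, hk, rfl⟩ := hk
      simpa only [inv_simple, mul_assoc] using ih.mul_simple hK hk
  induction ha using Subgroup.closure_induction_left with
  | one => simpa using hright
  | mul_left _ hi a _ ih =>
    obtain ⟨i, hi, rfl⟩ := hi
    simpa only [mul_assoc] using ih.simple_mul hJ hi
  | inv_mul_cancel _ hi a _ ih =>
    obtain ⟨i, hi, rfl⟩ := hi
    simpa only [inv_simple, mul_assoc] using ih.simple_mul hJ hi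

theorem IsMinDoubleCosetRep.eq_of_mem_doubleCoset {J K : Set B} {u v : W}
    (hu : cs.IsMinDoubleCosetRep J K u) (hv : cs.IsMinDoubleCosetRep J K v)
    (hvu : v ∈ doubleCoset u (cs.parabolic J) (cs.parabolic K)) : v = u := by
  obtain ⟨δ, hδ, rfl⟩ := cs.exists_isReduced u
  obtain ⟨α, β, -, -, hred, rfl⟩ := hu.hasReducedWordThrough hδ rfl hvu
  have hle := hv.length_le (x := π δ) <| by
    rw [doubleCoset_eq_of_mem hvu]
    exact mem_doubleCoset_self _ _ _
  rw [hred, hδ, length_append, length_append] at hle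
  obtain ⟨rfl, rfl⟩ : α = [] ∧ β = [] :=
    ⟨List.length_eq_zero_iff.1 (by omega), List.length_eq_zero_iff.1 (by omega)⟩
  simp

theorem exists_isMinDoubleCosetRep_mem_doubleCoset (J K : Set B) (x : W) :
    ∃ w ∈ doubleCoset x (cs.parabolic J) (cs.parabolic K), cs.IsMinDoubleCosetRep J K w := by
  have hD : (doubleCoset x (cs.parabolic J : Set W) (cs.parabolic K)).Nonempty :=
    ⟨x, mem_doubleCoset_self _ _ x⟩
  have hmem := Function.argminOn_mem cs.length _ hD
  refine ⟨_, hmem, fun a ha b hb ↦ Function.argminOn_le cs.length _ ?_⟩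
  exact (doubleCoset_eq_of_mem hmem).le (mem_doubleCoset.2 ⟨a, ha, b, hb, rfl⟩)

end CoxeterSystem

theorem QuotientGroup.mk_mem_orbit_iff_mem_doubleCoset {G : Type*} [Group G]
    {H K : Subgroup G} {a b : G} :
    (a : G ⧸ K) ∈ MulAction.orbit H (b : G ⧸ K) ↔ a ∈ doubleCoset b H K := by
  rw [MulAction.mem_orbit_iff, mem_doubleCoset]
  constructor
  · rintro ⟨h, hh⟩
    exact ⟨h, h.2, (h * b)⁻¹ * a, QuotientGroup.eq.1 hh, by group⟩
  · rintro ⟨h, hh, k, hk, rfl⟩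
    exact ⟨⟨h, hh⟩, QuotientGroup.eq.2 (by simpa [mul_assoc] using hk)⟩

theorem MulAction.stabilizer_mk_eq_subgroupOf_map_conj {G : Type*} [Group G]
    (H K : Subgroup G) (g : G) :
    stabilizer H (g : G ⧸ K) = (K.map (MulAut.conj g).toMonoidHom).subgroupOf H := by
  have hG : stabilizer G (g : G ⧸ K) = K.map (MulAut.conj g).toMonoidHom := by
    have := stabilizer_smul_eq_stabilizer_map_conj g ((1 : G) : G ⧸ K)
    rwa [stabilizer_quotient, Quotient.smul_mk, smul_eq_mul, mul_one] at this
  rw [← hG]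
  rfl

theorem MulAction.orbitEquivQuotientStabilizer_smul {G X : Type*} [Group G] [MulAction G X]
    (b : X) (g : G) (x : orbit G b) :
    orbitEquivQuotientStabilizer G b (g • x) = g • orbitEquivQuotientStabilizer G b x := by
  set e := orbitEquivQuotientStabilizer G b
  obtain ⟨q, rfl⟩ := e.symm.surjective x
  induction q using QuotientGroup.induction_on with
  | H h =>
    apply e.symm.injective
    ext
    simp [e, orbitEquivQuotientStabilizer_symm_apply, mul_smul]

/-- The orbits of the left `W_J`-action on `W/W_K` are in natural bijection with the set
`ᴶWᴷ` of minimal-length `(W_J, W_K)`-double coset representatives (via `w ↦` the orbit of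
the coset `w·W_K`); moreover, the orbit of `w·W_K`, for `w ∈ ᴶWᴷ`, is isomorphic as a
`W_J`-set to `W_J/(W_J ∩ w·W_K·w⁻¹)`. -/
theorem orbits_of_parabolic_on_cosets
    {B W : Type*} [Group W] {M : CoxeterMatrix B} (cs : CoxeterSystem M W)
    (J K : Set B) :
    Function.Bijective
      (fun u : {w : W // cs.IsMinDoubleCosetRep J K w} =>
        Quotient.mk (MulAction.orbitRel (cs.parabolic J) (W ⧸ cs.parabolic K))
          (QuotientGroup.mk u.1)) ∧
    ∀ w : W, cs.IsMinDoubleCosetRep J K w →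
      ∃ e : MulAction.orbit (cs.parabolic J) (QuotientGroup.mk w : W ⧸ cs.parabolic K) ≃
          (cs.parabolic J) ⧸ ((cs.parabolic J ⊓ (cs.parabolic K).map
            (MulAut.conj w).toMonoidHom).subgroupOf (cs.parabolic J)),
        ∀ (g : cs.parabolic J) (x), e (g • x) = g • e x := by
  refine ⟨⟨?_, ?_⟩, fun w _ ↦ ?_⟩
  · rintro ⟨u, hu⟩ ⟨v, hv⟩ h
    exact Subtype.ext <| hv.eq_of_mem_doubleCoset hu <|
      QuotientGroup.mk_mem_orbit_iff_mem_doubleCoset.1 (Quotient.exact h)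
  · refine Quotient.ind fun y ↦ QuotientGroup.induction_on y fun x ↦ ?_
    obtain ⟨w, hwx, hw⟩ := cs.exists_isMinDoubleCosetRep_mem_doubleCoset J K x
    exact ⟨⟨w, hw⟩, Quotient.sound (QuotientGroup.mk_mem_orbit_iff_mem_doubleCoset.2 hwx)⟩
  · rw [Subgroup.inf_subgroupOf_left, ← MulAction.stabilizer_mk_eq_subgroupOf_map_conj]
    exact ⟨_, MulAction.orbitEquivQuotientStabilizer_smul _⟩
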